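/- arXiv:1401.6775 — 3 statements merged into one kernel-verified Lean document; each statement's English description precedes it below -/
import Mathlib

section
/- Suppose trajectories ŝᵢ*(j) satisfy ‖ŝᵢ*(j) - sᵢ*(j)‖ ≤ d_τ for all j (presumable vs. true planned trajectory mismatch), that vehicle i's chosen trajectory satisfies ‖sᵢ*(r) - s(r+1 | k-1)‖ > d_mut for all r (clearing the previously broadcast trajectory), and that the vehicle at hand chose s*(· | k) so that ‖s*(r|k) - ŝᵢ*(r|k)‖ > d_mut + d_τ for all r and all presumable trajectories surviving the refinement ‖ŝᵢ*(r) - s(r+1|k-1)‖ > d_mut - d_τ. Then ‖s*(r|k) - sᵢ*(r|k)‖ ≥ d_mut for all r. -/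
theorem sub_lt_norm_sub_of_lt_norm_sub {E : Type*} [SeminormedAddGroup E] {a b c : E} {m t : ℝ}
    (hac : m < ‖a - c‖) (hab : ‖a - b‖ ≤ t) : m - t < ‖b - c‖ := by
  linarith [norm_sub_le_norm_sub_add_norm_sub a b c]

/-- Mutual feasibility is preserved by the decentralized refinement rules.
`sprev r` denotes the previously broadcast probational trajectory
`s(r | k-1)` of the vehicle at hand; `strue` is the true planned trajectory
`sᵢ*(· | k)` of vehicle `i`; `shat` is the presumable planned trajectory
`ŝᵢ*(· | k)` computed by the vehicle at hand, with uniform error `d_τ`;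
`schosen` is the trajectory `s*(· | k)` chosen by the vehicle at hand. -/
theorem refinement_preserves_mutual_feasibility
    (d_mut d_tau : ℝ)
    (sprev strue shat schosen : ℕ → EuclideanSpace ℝ (Fin 2))
    (hmismatch : ∀ j : ℕ, ‖shat j - strue j‖ ≤ d_tau)
    (hclear : ∀ r : ℕ, d_mut < ‖strue r - sprev (r + 1)‖)
    (hrefine : (∀ r : ℕ, d_mut - d_tau < ‖shat r - sprev (r + 1)‖) →
      ∀ r : ℕ, d_mut + d_tau < ‖schosen r - shat r‖) :
    ∀ r : ℕ, d_mut ≤ ‖schosen r - strue r‖ := by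
  have hsurvive : ∀ r, d_mut - d_tau < ‖shat r - sprev (r + 1)‖ := fun r =>
    sub_lt_norm_sub_of_lt_norm_sub (hclear r) (norm_sub_rev (shat r) (strue r) ▸ hmismatch r)
  intro r
  have hchosen := sub_lt_norm_sub_of_lt_norm_sub
    (norm_sub_rev (schosen r) (shat r) ▸ hrefine hsurvive r) (hmismatch r)
  rw [add_sub_cancel_right, norm_sub_rev] at hchosen
  exact hchosen.le
end

section
/- Consider the scalar sliding-mode system η̇_Δ = v_Δ + w_η(t), v̇_Δ = -u_exc · sgn(k₀η_Δ + k₁v_Δ) + w_v(t), with |w_η(t)| ≤ w̄_η, |w_v(t)| ≤ w̄_v, |v_Δ| ≤ 2v_max, k₀, k₁ > 0, u_exc > w̄_v, and u_exc - w̄_v > (k₀/k₁)(2v_max + w̄_η). If initially η_Δ(0) = 0 and v_Δ(0) = 0, then the surface S := k₀η_Δ + k₁v_Δ = 0 is sliding (S(t) = 0 for all t ≥ 0) and |η_Δ(t)| ≤ k₁w̄_η/k₀ for all t ≥ 0. -/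
/-!
Along the closed loop the surface value `S = k₀ η_Δ + k₁ v_Δ` obeys `Ṡ = d - k₁ u_exc sgn S`, where
the gain condition makes the drift `d = k₀ (v_Δ + w_η) + k₁ w_v` smaller than `k₁ u_exc` in absolute
value; so `S` is pushed back towards `0` from either side and never leaves it. On the surface,
`η̇_Δ = -(k₀/k₁) η_Δ + w_η`, and the same barrier argument traps `η_Δ` in the band where the
restoring term dominates the disturbance.
-/

open Set

section

variable {f f' d w : ℝ → ℝ} {a b c k K W : ℝ}

/-- Fencing by the barriers `c + ε`, `ε > 0`: nothing is asked of `f'` on the level set `f = c`,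
where `Ṡ` has no sign on the sliding surface because `Real.sign 0 = 0`. -/
theorem image_le_of_deriv_right_neg_of_gt (hf : ContinuousOn f (Icc a b))
    (hf' : ∀ x ∈ Ico a b, HasDerivWithinAt f (f' x) (Ici x) x) (ha : f a ≤ c)
    (hneg : ∀ x ∈ Ico a b, c < f x → f' x < 0) : ∀ ⦃x⦄, x ∈ Icc a b → f x ≤ c := by
  intro x hx
  refine le_of_forall_pos_le_add fun ε hε => ?_
  refine image_le_of_deriv_right_lt_deriv_boundary' hf hf' (B := fun _ => c + ε) (B' := 0)
    (by linarith) continuousOn_const (fun y _ => hasDerivWithinAt_const _ _ _) ?_ hx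
  intro y hy hfy
  exact hneg y hy (by linarith)

theorem abs_image_le_of_deriv_right (hf : ContinuousOn f (Icc a b))
    (hf' : ∀ x ∈ Ico a b, HasDerivWithinAt f (f' x) (Ici x) x) (ha : |f a| ≤ c)
    (hneg : ∀ x ∈ Ico a b, c < f x → f' x < 0) (hpos : ∀ x ∈ Ico a b, f x < -c → 0 < f' x) :
    ∀ ⦃x⦄, x ∈ Icc a b → |f x| ≤ c := by
  intro x hx
  have hupper := image_le_of_deriv_right_neg_of_gt hf hf' (abs_le.mp ha).2 hneg hx
  have hlower := image_le_of_deriv_right_neg_of_gt (f := -f) (f' := -f') (c := c) hf.neg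
    (fun y hy => (hf' y hy).neg) (neg_le.mp (abs_le.mp ha).1)
    (fun y hy hy' => neg_neg_of_pos (hpos y hy (by simp at hy'; linarith))) hx
  exact abs_le.mpr ⟨by simp at hlower; linarith, hupper⟩

theorem eq_zero_of_deriv_right_eq_sub_mul_sign (hf : ContinuousOn f (Icc a b))
    (hf' : ∀ x ∈ Ico a b, HasDerivWithinAt f (d x - K * Real.sign (f x)) (Ici x) x)
    (hd : ∀ x ∈ Ico a b, |d x| < K) (ha : f a = 0) : ∀ ⦃x⦄, x ∈ Icc a b → f x = 0 := by
  intro x hx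
  refine abs_nonpos_iff.mp (abs_image_le_of_deriv_right hf hf' (by simp [ha]) ?_ ?_ hx)
  · intro y hy hfy
    rw [Real.sign_of_pos hfy]
    linarith [(abs_lt.mp (hd y hy)).2]
  · intro y hy hfy
    rw [Real.sign_of_neg (by linarith)]
    linarith [(abs_lt.mp (hd y hy)).1]

theorem abs_le_of_deriv_right_eq_neg_mul_add (hk : 0 < k)
    (hf : ContinuousOn f (Icc a b))
    (hf' : ∀ x ∈ Ico a b, HasDerivWithinAt f (-k * f x + w x) (Ici x) x)
    (hw : ∀ x ∈ Ico a b, |w x| ≤ W) (hc : W ≤ k * c) (ha : |f a| ≤ c) :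
    ∀ ⦃x⦄, x ∈ Icc a b → |f x| ≤ c := by
  refine abs_image_le_of_deriv_right hf hf' ha ?_ ?_
  · intro y hy hfy
    nlinarith [(abs_le.mp (hw y hy)).2]
  · intro y hy hfy
    nlinarith [(abs_le.mp (hw y hy)).1]

end

theorem sliding_surface_eq_zero {k₀ k₁ u_exc v_max Wη Wv t : ℝ} {η v wη wv : ℝ → ℝ}
    (hk₀ : 0 < k₀) (hk₁ : 0 < k₁) (hgain : k₀ * (2 * v_max + Wη) < k₁ * (u_exc - Wv))
    (hwη : ∀ s, 0 ≤ s → |wη s| ≤ Wη) (hwv : ∀ s, 0 ≤ s → |wv s| ≤ Wv)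
    (hvbound : ∀ s, 0 ≤ s → |v s| ≤ 2 * v_max)
    (hη : ∀ s, 0 ≤ s → HasDerivAt η (v s + wη s) s)
    (hv : ∀ s, 0 ≤ s → HasDerivAt v (-u_exc * Real.sign (k₀ * η s + k₁ * v s) + wv s) s)
    (hη0 : η 0 = 0) (hv0 : v 0 = 0) :
    ∀ ⦃s⦄, s ∈ Icc 0 t → k₀ * η s + k₁ * v s = 0 := by
  set S : ℝ → ℝ := fun s => k₀ * η s + k₁ * v s
  have hS' (s : ℝ) (hs : 0 ≤ s) : HasDerivAt S
      ((k₀ * (v s + wη s) + k₁ * wv s) - k₁ * u_exc * Real.sign (S s)) s :=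
    (((hη s hs).const_mul k₀).add ((hv s hs).const_mul k₁)).congr_deriv (by ring)
  have hdrift (s : ℝ) (hs : 0 ≤ s) : |k₀ * (v s + wη s) + k₁ * wv s| < k₁ * u_exc :=
    calc |k₀ * (v s + wη s) + k₁ * wv s|
        ≤ k₀ * (|v s| + |wη s|) + k₁ * |wv s| := by
          grw [abs_add_le, abs_mul, abs_mul, abs_add_le, abs_of_pos hk₀, abs_of_pos hk₁]
      _ ≤ k₀ * (2 * v_max + Wη) + k₁ * Wv := by
          grw [hvbound s hs, hwη s hs, hwv s hs]
      _ < k₁ * u_exc := by linarith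
  exact eq_zero_of_deriv_right_eq_sub_mul_sign
    (fun x hx => (hS' x hx.1).continuousAt.continuousWithinAt)
    (fun x hx => (hS' x hx.1).hasDerivWithinAt) (fun x hx => hdrift x hx.1)
    (by simp [hη0, hv0])

theorem sliding_mode_longitudinal_tracking_general
    (k₀ k₁ u_exc v_max Wη Wv : ℝ)
    (hk₀ : 0 < k₀) (hk₁ : 0 < k₁)
    (hgain : (k₀ / k₁) * (2 * v_max + Wη) < u_exc - Wv)
    (η v wη wv : ℝ → ℝ)
    (hwη : ∀ t, 0 ≤ t → |wη t| ≤ Wη)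
    (hwv : ∀ t, 0 ≤ t → |wv t| ≤ Wv)
    (hvbound : ∀ t, 0 ≤ t → |v t| ≤ 2 * v_max)
    (hη : ∀ t, 0 ≤ t → HasDerivAt η (v t + wη t) t)
    (hv : ∀ t, 0 ≤ t →
      HasDerivAt v (-u_exc * Real.sign (k₀ * η t + k₁ * v t) + wv t) t)
    (hη0 : η 0 = 0) (hv0 : v 0 = 0) :
    ∀ t, 0 ≤ t → k₀ * η t + k₁ * v t = 0 ∧ |η t| ≤ k₁ * Wη / k₀ := by
  intro t ht
  rw [div_mul_eq_mul_div, div_lt_iff₀' hk₁] at hgain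
  have hsliding := sliding_surface_eq_zero (t := t) hk₀ hk₁ hgain hwη hwv hvbound hη hv hη0 hv0
  have hη' (s : ℝ) (hs : s ∈ Icc 0 t) : HasDerivAt η (-(k₀ / k₁) * η s + wη s) s := by
    have hvη : v s = -(k₀ / k₁) * η s := by
      field_simp
      linarith [hsliding hs]
    simpa [hvη] using hη s hs.1
  have hWη : 0 ≤ Wη := (abs_nonneg _).trans (hwη 0 le_rfl)
  refine ⟨hsliding ⟨ht, le_rfl⟩, ?_⟩
  refine abs_le_of_deriv_right_eq_neg_mul_add (div_pos hk₀ hk₁)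
    (fun x hx => (hη x hx.1).continuousAt.continuousWithinAt)
    (fun x hx => (hη' x (Ico_subset_Icc_self hx)).hasDerivWithinAt)
    (fun x hx => hwη x hx.1) (le_of_eq (by field_simp)) ?_ ⟨ht, le_rfl⟩
  rw [hη0, abs_zero]
  positivity

/-- Sliding-mode longitudinal tracking: the surface `S = k₀η_Δ + k₁v_Δ = 0` is
sliding and the longitudinal error stays bounded by `k₁ w̄_η / k₀`. -/
theorem sliding_mode_longitudinal_tracking
    (k₀ k₁ u_exc v_max Wη Wv : ℝ)
    (hk₀ : 0 < k₀) (hk₁ : 0 < k₁)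
    (huW : Wv < u_exc)
    (hgain : (k₀ / k₁) * (2 * v_max + Wη) < u_exc - Wv)
    (η v wη wv : ℝ → ℝ)
    (hwη : ∀ t, 0 ≤ t → |wη t| ≤ Wη)
    (hwv : ∀ t, 0 ≤ t → |wv t| ≤ Wv)
    (hvbound : ∀ t, 0 ≤ t → |v t| ≤ 2 * v_max)
    (hη : ∀ t, 0 ≤ t → HasDerivAt η (v t + wη t) t)
    (hv : ∀ t, 0 ≤ t →
      HasDerivAt v (-u_exc * Real.sign (k₀ * η t + k₁ * v t) + wv t) t)
    (hη0 : η 0 = 0) (hv0 : v 0 = 0) :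
    ∀ t, 0 ≤ t → k₀ * η t + k₁ * v t = 0 ∧ |η t| ≤ k₁ * Wη / k₀ :=
  sliding_mode_longitudinal_tracking_general k₀ k₁ u_exc v_max Wη Wv hk₀ hk₁ hgain η v wη wv hwη hwv
    hvbound hη hv hη0 hv0
end

section
/- In the boundary-following navigation law, if ‖R_n‖ > ‖C_end(k)‖ then the target point A(k) satisfies ‖A(k)‖ ≥ ‖C_end(k)‖ cos Δφ ≥ d_tar·cos Δφ, and if moreover ‖C_end(k)‖ > 2 d_tar and ‖R_n‖ ≤ ‖C_end(k)‖ (so A(k) = C_end(k)), then ‖A(k)‖ > d_tar. In both cases ‖A(k)‖ is bounded below away from zero. -/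
theorem target_point_distance_lower_bound_general
    (d_tar Δφ : ℝ) (hcos : 0 ≤ Real.cos Δφ)
    (C Rn A : EuclideanSpace ℝ (Fin 2))
    (hC : d_tar ≤ ‖C‖)
    (hAfar : ‖Rn‖ > ‖C‖ →
      ‖A‖ = ‖C‖ * Real.cos Δφ +
        Real.sqrt (d_tar ^ 2 - (‖C‖ * Real.sin Δφ) ^ 2))
    (hAnear : ‖Rn‖ ≤ ‖C‖ → A = C) :
    (‖Rn‖ > ‖C‖ →
      ‖C‖ * Real.cos Δφ ≤ ‖A‖ ∧ d_tar * Real.cos Δφ ≤ ‖C‖ * Real.cos Δφ) ∧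
    (‖C‖ > 2 * d_tar → ‖Rn‖ ≤ ‖C‖ → d_tar < ‖A‖) := by
  refine ⟨fun hfar => ⟨?_, mul_le_mul_of_nonneg_right hC hcos⟩, fun hCfar hnear => ?_⟩
  · rw [hAfar hfar]
    exact le_add_of_nonneg_right (Real.sqrt_nonneg _)
  · rw [hAnear hnear]
    linarith [norm_nonneg C]

/-- Lower bound on the distance to the target point `A(k)`: if the adjacent
detection `R_n` is farther than `C_end(k)` then
`‖A‖ ≥ ‖C‖ cos Δφ ≥ d_tar cos Δφ`; if instead `‖R_n‖ ≤ ‖C‖` (so `A = C`)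
and `‖C‖ > 2 d_tar`, then `‖A‖ > d_tar`. -/
theorem target_point_distance_lower_bound
    (d_tar Δφ : ℝ) (hdtar : 0 < d_tar) (hcos : 0 ≤ Real.cos Δφ)
    (C Rn A : EuclideanSpace ℝ (Fin 2))
    (hC : d_tar ≤ ‖C‖)
    (hAfar : ‖Rn‖ > ‖C‖ →
      ‖A‖ = ‖C‖ * Real.cos Δφ +
        Real.sqrt (d_tar ^ 2 - (‖C‖ * Real.sin Δφ) ^ 2))
    (hAnear : ‖Rn‖ ≤ ‖C‖ → A = C) :
    (‖Rn‖ > ‖C‖ →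
      ‖C‖ * Real.cos Δφ ≤ ‖A‖ ∧ d_tar * Real.cos Δφ ≤ ‖C‖ * Real.cos Δφ) ∧
    (‖C‖ > 2 * d_tar → ‖Rn‖ ≤ ‖C‖ → d_tar < ‖A‖) :=
  target_point_distance_lower_bound_general d_tar Δφ hcos C Rn A hC hAfar hAnear
end
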